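/- Let (V,w) be a weighted graph with V partitioned into disjoint nonempty parts V_1,…,V_c, let k_1,…,k_c be integers with 1 ≤ k_i ≤ |V_i|/2 for each i, and let 0 < ε ≤ 1/2. For each i ∈ [c], let H_i ⊆ V_i be a set such that every vertex of H_i has weighted degree at least the weighted degree of every vertex of V_i∖H_i, and such that either H_i = V_i or |H_i| ≥ k_i/ε. Then the maximum of δ_w(S) over all S ⊆ V with S∩V_i ⊆ H_i and |S∩V_i| = k_i for all i ∈ [c] is at least (1 − 4cε) times the maximum of δ_w(S) over all S ⊆ V with |S∩V_i| = k_i for all i ∈ [c]. (Approximate kernel for Constrained Max-Cut, Theorem 2.3.) -/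

import Mathlib

/-!
Start from an optimal feasible set `S` (cut value `M`) and repair the parts one at a time. In
part `i`, the `r` vertices `R` of `S ∩ V_i` outside `H_i` are swapped for `r` vertices
`B ⊆ A := H_i \ S`. Every vertex of `B` has degree at least that of every vertex of `R`, so the
swap loses at most `2 w(B, C) + w(B, B)`, where `C := S \ R`. Averaged over all `r`-subsets
`B` of `A` this is `2 (r/a) w(A, C) + r(r-1)/(a(a-1)) w(A, A)` with `a := |A|`. The first term
is at most `2εM`, because `A` lies outside `S` and `r ≤ ε a`. The second is at most `2εM`: each
`k_i`-subset `K` of `A` completes `S \ V_i` to a feasible set, so `w(K, A \ K) ≤ M`, and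
averaging over `K` bounds `w(A, A)`. Each part thus costs at most `4εM`, all `c` parts `4cεM`.
-/

open Finset

/-- The cut value of a set `S`: total weight of pairs with exactly one endpoint in `S`. -/
noncomputable def cutVal {V : Type*} [Fintype V] [DecidableEq V]
    (w : V → V → ℝ) (S : Finset V) : ℝ :=
  ∑ u ∈ S, ∑ v ∈ Sᶜ, w u v

/-- The weighted degree of a vertex `v`. -/
noncomputable def wdeg {V : Type*} [Fintype V] [DecidableEq V]
    (w : V → V → ℝ) (v : V) : ℝ :=
  ∑ u ∈ Finset.univ.erase v, w u v

open Function

namespace Finset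

lemma sum_sum_filter_eq_nsmul_sum {ι α M : Type*} [AddCommMonoid M] (𝒮 : Finset ι)
    (X : Finset α) (Φ : ι → α → Prop) [∀ i a, Decidable (Φ i a)] (f : α → M) {n : ℕ}
    (hn : ∀ p ∈ X, #{B ∈ 𝒮 | Φ B p} = n) :
    ∑ B ∈ 𝒮, ∑ p ∈ X with Φ B p, f p = n • ∑ p ∈ X, f p := by
  simp_rw [sum_filter]
  rw [sum_comm, smul_sum]
  refine sum_congr rfl fun p hp => ?_
  rw [← sum_filter, sum_const, hn p hp]

lemma sum_le_sum_of_card_eq_of_forall_le {α β : Type*} [AddCommMonoid β] [LinearOrder β]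
    [IsOrderedAddMonoid β] {s t : Finset α} {f : α → β} (hst : #s = #t)
    (h : ∀ x ∈ s, ∀ y ∈ t, f x ≤ f y) : ∑ x ∈ s, f x ≤ ∑ y ∈ t, f y := by
  rcases t.eq_empty_or_nonempty with rfl | ht
  · rw [card_empty, card_eq_zero] at hst
    simp [hst]
  obtain ⟨y, hy, hmin⟩ := exists_min_image t f ht
  calc ∑ x ∈ s, f x ≤ #s • f y := sum_le_card_nsmul _ _ _ fun x hx => h x hx y hy
    _ = #t • f y := by rw [hst]
    _ ≤ ∑ y ∈ t, f y := card_nsmul_le_sum _ _ _ hmin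

end Finset

namespace ConstrainedMaxCut

section Weights

variable {V : Type*} {w : V → V → ℝ}

noncomputable def crossWeight (w : V → V → ℝ) (P Q : Finset V) : ℝ :=
  ∑ u ∈ P, ∑ v ∈ Q, w u v

noncomputable def innerWeight [DecidableEq V] (w : V → V → ℝ) (P : Finset V) : ℝ :=
  ∑ p ∈ P.offDiag, w p.1 p.2

noncomputable def swapLoss [DecidableEq V] (w : V → V → ℝ) (C B : Finset V) : ℝ :=
  2 * crossWeight w B C + innerWeight w B

lemma crossWeight_nonneg (hw : ∀ u v, 0 ≤ w u v) (P Q : Finset V) : 0 ≤ crossWeight w P Q :=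
  sum_nonneg fun _ _ => sum_nonneg fun _ _ => hw _ _

lemma innerWeight_nonneg [DecidableEq V] (hw : ∀ u v, 0 ≤ w u v) (P : Finset V) :
    0 ≤ innerWeight w P :=
  sum_nonneg fun _ _ => hw _ _

lemma innerWeight_eq_zero_of_card_le_one [DecidableEq V] {P : Finset V} (hP : #P ≤ 1) :
    innerWeight w P = 0 := by
  have : P.offDiag = ∅ := by
    ext ⟨x, y⟩
    simpa [mem_offDiag] using fun hx hy => card_le_one.mp hP x hx y hy
  rw [innerWeight, this, sum_empty]

lemma innerWeight_eq_sum_sum_erase [DecidableEq V] (P : Finset V) :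
    innerWeight w P = ∑ u ∈ P, ∑ v ∈ P.erase u, w u v :=
  sum_finset_product _ _ _ fun p => by
    simp only [mem_offDiag, mem_erase]
    tauto

lemma crossWeight_comm (hsymm : ∀ u v, w u v = w v u) (P Q : Finset V) :
    crossWeight w P Q = crossWeight w Q P := by
  rw [crossWeight, sum_comm]
  exact sum_congr rfl fun u _ => sum_congr rfl fun v _ => hsymm v u

lemma crossWeight_union_left [DecidableEq V] {P P' : Finset V} (h : Disjoint P P')
    (Q : Finset V) : crossWeight w (P ∪ P') Q = crossWeight w P Q + crossWeight w P' Q :=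
  sum_union h

lemma crossWeight_union_right [DecidableEq V] (P : Finset V) {Q Q' : Finset V}
    (h : Disjoint Q Q') : crossWeight w P (Q ∪ Q') = crossWeight w P Q + crossWeight w P Q' := by
  simp only [crossWeight, sum_union h, sum_add_distrib]

lemma crossWeight_mono (hw : ∀ u v, 0 ≤ w u v) {P P' Q Q' : Finset V}
    (hP : P ⊆ P') (hQ : Q ⊆ Q') : crossWeight w P Q ≤ crossWeight w P' Q' :=
  (sum_le_sum fun _ _ => sum_le_sum_of_subset_of_nonneg hQ fun _ _ _ => hw _ _).trans
    (sum_le_sum_of_subset_of_nonneg hP fun _ _ _ => sum_nonneg fun _ _ => hw _ _)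

variable [Fintype V] [DecidableEq V]

lemma cutVal_eq_crossWeight (S : Finset V) : cutVal w S = crossWeight w S Sᶜ := rfl

lemma cutVal_nonneg (hw : ∀ u v, 0 ≤ w u v) (S : Finset V) : 0 ≤ cutVal w S :=
  crossWeight_nonneg hw _ _

lemma sum_wdeg_eq_innerWeight_add_crossWeight (hsymm : ∀ u v, w u v = w v u) (B : Finset V) :
    ∑ u ∈ B, wdeg w u = innerWeight w B + crossWeight w B Bᶜ := by
  rw [innerWeight_eq_sum_sum_erase, crossWeight, ← sum_add_distrib]
  refine sum_congr rfl fun u hu => ?_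
  have hsplit : univ.erase u = B.erase u ∪ Bᶜ := by
    ext v
    by_cases hv : v ∈ B <;> simp only [mem_erase, mem_univ, mem_union, mem_compl, hv] <;> grind
  rw [wdeg, hsplit, sum_union (disjoint_compl_right.mono_left (erase_subset u B))]
  simp only [hsymm _ u]

lemma crossWeight_le_cutVal (hsymm : ∀ u v, w u v = w v u) (hw : ∀ u v, 0 ≤ w u v)
    {A C S : Finset V} (hAS : Disjoint A S) (hCS : C ⊆ S) : crossWeight w A C ≤ cutVal w S :=
  calc crossWeight w A C ≤ crossWeight w A S := crossWeight_mono hw subset_rfl hCS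
    _ = crossWeight w S A := crossWeight_comm hsymm _ _
    _ ≤ cutVal w S := crossWeight_mono hw subset_rfl (subset_compl_iff_disjoint_left.mpr hAS.symm)

lemma crossWeight_sdiff_le_cutVal_union (hw : ∀ u v, 0 ≤ w u v) {A K S : Finset V}
    (hAS : Disjoint A S) : crossWeight w K (A \ K) ≤ cutVal w (S ∪ K) :=
  crossWeight_mono hw subset_union_right fun x hx => by
    have := disjoint_left.mp hAS (mem_sdiff.mp hx).1
    simp_all

/-- Expanding both cuts and both degree sums over the blocks `C`, `R`, `B` and the rest `D` gives
`cut (C ∪ B) + swapLoss C B - cut (C ∪ R) = (deg B - deg R) + w(R, R) + 2 w(C, R)`. -/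
lemma cutVal_sub_swapLoss_le_cutVal (hsymm : ∀ u v, w u v = w v u)
    (hw : ∀ u v, 0 ≤ w u v) {C R B : Finset V} (hCR : Disjoint C R) (hCB : Disjoint C B)
    (hRB : Disjoint R B) (hdeg : ∑ v ∈ R, wdeg w v ≤ ∑ u ∈ B, wdeg w u) :
    cutVal w (C ∪ R) - swapLoss w C B ≤ cutVal w (C ∪ B) := by
  rw [swapLoss]
  set D := (C ∪ R ∪ B)ᶜ
  have hCD : Disjoint C D := disjoint_compl_right.mono_left (by grind)
  have hRD : Disjoint R D := disjoint_compl_right.mono_left (by grind)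
  have hBD : Disjoint B D := disjoint_compl_right.mono_left (by grind)
  obtain ⟨hCRc, hCBc, hBc, hRc⟩ : (C ∪ R)ᶜ = B ∪ D ∧ (C ∪ B)ᶜ = R ∪ D ∧ Bᶜ = C ∪ R ∪ D ∧
      Rᶜ = C ∪ B ∪ D := by
    rw [disjoint_left] at hCR hCB hRB
    refine ⟨?_, ?_, ?_, ?_⟩ <;> ext x <;> simp only [D, mem_compl, mem_union] <;> grind
  have hcutS : cutVal w (C ∪ R) = crossWeight w C B + crossWeight w C D + crossWeight w R B
      + crossWeight w R D := by
    rw [cutVal_eq_crossWeight, hCRc, crossWeight_union_left hCR, crossWeight_union_right _ hBD,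
      crossWeight_union_right _ hBD]
    ring
  have hcutT : cutVal w (C ∪ B) = crossWeight w C R + crossWeight w C D + crossWeight w B R
      + crossWeight w B D := by
    rw [cutVal_eq_crossWeight, hCBc, crossWeight_union_left hCB, crossWeight_union_right _ hRD,
      crossWeight_union_right _ hRD]
    ring
  have hdegB : ∑ u ∈ B, wdeg w u = innerWeight w B + crossWeight w B C + crossWeight w B R
      + crossWeight w B D := by
    rw [sum_wdeg_eq_innerWeight_add_crossWeight hsymm, hBc,
      crossWeight_union_right _ (disjoint_union_left.mpr ⟨hCD, hRD⟩),
      crossWeight_union_right _ hCR]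
    ring
  have hdegR : ∑ u ∈ R, wdeg w u = innerWeight w R + crossWeight w R C + crossWeight w R B
      + crossWeight w R D := by
    rw [sum_wdeg_eq_innerWeight_add_crossWeight hsymm, hRc,
      crossWeight_union_right _ (disjoint_union_left.mpr ⟨hCD, hBD⟩),
      crossWeight_union_right _ hCB]
    ring
  have := crossWeight_comm hsymm B C
  have := crossWeight_comm hsymm B R
  have := crossWeight_comm hsymm R C
  have := innerWeight_nonneg hw R
  have := crossWeight_nonneg hw C R
  linarith

end Weights

section Counting

variable {V : Type*} [DecidableEq V] {w : V → V → ℝ}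

lemma mul_sum_powersetCard_crossWeight (A C : Finset V) {r : ℕ} (hr : 1 ≤ r) :
    (#A : ℝ) * ∑ B ∈ A.powersetCard r, crossWeight w B C
      = r * (#A).choose r * crossWeight w A C := by
  have hB : ∀ B ∈ A.powersetCard r, crossWeight w B C = ∑ u ∈ A with u ∈ B, ∑ v ∈ C, w u v := by
    intro B hB
    rw [crossWeight, filter_mem_eq_inter, inter_eq_right.mpr (mem_powersetCard.mp hB).1]
  have hcount : ∀ u ∈ A, #{B ∈ A.powersetCard r | u ∈ B} = (#A - 1).choose (r - 1) := by
    intro u hu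
    simpa using card_filter_powersetCard_subset {u} A r (singleton_subset_iff.mpr hu) (by simpa)
  have hchoose : (#A).choose r * r.choose 1 = (#A).choose 1 * (#A - 1).choose (r - 1) :=
    Nat.choose_mul hr
  rw [sum_congr rfl hB, sum_sum_filter_eq_nsmul_sum _ _ _ _ hcount, nsmul_eq_mul, ← mul_assoc,
    crossWeight]
  simp only [Nat.choose_one_right] at hchoose
  congr 1
  exact_mod_cast (hchoose.symm.trans (mul_comm _ _))

lemma mul_sum_powersetCard_innerWeight (A : Finset V) (r : ℕ) :
    (#A : ℝ) * (#A - 1) * ∑ B ∈ A.powersetCard r, innerWeight w B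
      = r * (r - 1) * (#A).choose r * innerWeight w A := by
  rcases lt_or_ge r 2 with hr | hr
  · have hzero : ∀ B ∈ A.powersetCard r, innerWeight w B = 0 := fun B hB =>
      innerWeight_eq_zero_of_card_le_one (by rw [(mem_powersetCard.mp hB).2]; omega)
    rw [sum_congr rfl hzero]
    interval_cases r <;> simp
  have hB : ∀ B ∈ A.powersetCard r,
      innerWeight w B = ∑ p ∈ A.offDiag with p.1 ∈ B ∧ p.2 ∈ B, w p.1 p.2 := by
    intro B hB
    have hBA := (mem_powersetCard.mp hB).1
    rw [innerWeight]
    congr 1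
    ext p
    simp only [mem_offDiag, mem_filter]
    constructor
    · rintro ⟨h1, h2, h12⟩
      exact ⟨⟨hBA h1, hBA h2, h12⟩, h1, h2⟩
    · rintro ⟨⟨-, -, h12⟩, h1, h2⟩
      exact ⟨h1, h2, h12⟩
  have hcount : ∀ p ∈ A.offDiag,
      #{B ∈ A.powersetCard r | p.1 ∈ B ∧ p.2 ∈ B} = (#A - 2).choose (r - 2) := by
    rintro ⟨x, y⟩ hp
    obtain ⟨hx, hy, hxy⟩ := mem_offDiag.mp hp
    have := card_filter_powersetCard_subset {x, y} A r (by grind) (by rw [card_pair hxy]; exact hr)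
    simpa [card_pair hxy, insert_subset_iff] using this
  have hchoose : (#A).choose r * r.choose 2 = (#A).choose 2 * (#A - 2).choose (r - 2) :=
    Nat.choose_mul hr
  have hchooseR : ((#A).choose r : ℝ) * (r * (r - 1) / 2)
      = #A * (#A - 1) / 2 * (#A - 2).choose (r - 2) := by
    rw [← Nat.cast_choose_two, ← Nat.cast_choose_two]
    exact_mod_cast hchoose
  rw [sum_congr rfl hB, sum_sum_filter_eq_nsmul_sum _ _ _ _ hcount, nsmul_eq_mul, innerWeight]
  linear_combination (-2 * ∑ p ∈ A.offDiag, w p.1 p.2) * hchooseR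

lemma card_filter_powersetCard_mem_and_not_mem {A : Finset V} {m : ℕ} (hm : 1 ≤ m) {x y : V}
    (hx : x ∈ A) (hy : y ∈ A) (hxy : x ≠ y) :
    #{K ∈ A.powersetCard m | x ∈ K ∧ y ∉ K} = (#A - 2).choose (m - 1) := by
  have hfilter : {K ∈ A.powersetCard m | x ∈ K ∧ y ∉ K}
      = {K ∈ (A.erase y).powersetCard m | {x} ⊆ K} := by
    ext K
    simp only [mem_filter, mem_powersetCard, subset_erase, singleton_subset_iff]
    tauto
  rw [hfilter, card_filter_powersetCard_subset _ _ _ (by simpa using ⟨hxy, hx⟩) (by simpa),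
    card_erase_of_mem hy, card_singleton, Nat.sub_sub]

lemma mul_sum_powersetCard_crossWeight_sdiff (A : Finset V) {m : ℕ} (hm : 1 ≤ m)
    (hmA : m ≤ #A) :
    (#A : ℝ) * (#A - 1) * ∑ K ∈ A.powersetCard m, crossWeight w K (A \ K)
      = m * (#A - m) * (#A).choose m * innerWeight w A := by
  have hK : ∀ K ∈ A.powersetCard m,
      crossWeight w K (A \ K) = ∑ p ∈ A.offDiag with p.1 ∈ K ∧ p.2 ∉ K, w p.1 p.2 := by
    intro K hK
    have hKA := (mem_powersetCard.mp hK).1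
    rw [crossWeight, ← sum_product']
    congr 1
    ext p
    simp only [mem_product, mem_sdiff, mem_offDiag, mem_filter]
    constructor
    · rintro ⟨h1, h2, h2'⟩
      exact ⟨⟨hKA h1, h2, fun h => h2' (h ▸ h1)⟩, h1, h2'⟩
    · rintro ⟨⟨-, h2, -⟩, h1, h2'⟩
      exact ⟨h1, h2, h2'⟩
  have hcount : ∀ p ∈ A.offDiag,
      #{K ∈ A.powersetCard m | p.1 ∈ K ∧ p.2 ∉ K} = (#A - 2).choose (m - 1) := fun p hp =>
    have ⟨hx, hy, hxy⟩ := mem_offDiag.mp hp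
    card_filter_powersetCard_mem_and_not_mem hm hx hy hxy
  have h₁ : (#A - 1).choose m * m.choose 1 = (#A - 1).choose 1 * (#A - 1 - 1).choose (m - 1) :=
    Nat.choose_mul hm
  have h₂ := Nat.choose_mul_succ_eq (#A - 1) m
  rw [Nat.sub_add_cancel (by omega)] at h₂
  simp only [Nat.choose_one_right, Nat.sub_sub] at h₁
  have h₁R : ((#A - 1).choose m : ℝ) * m = (#A - 1) * (#A - 2).choose (m - 1) := by
    rw [← Nat.cast_pred (by omega)]; exact_mod_cast h₁
  have h₂R : ((#A - 1).choose m : ℝ) * #A = (#A).choose m * (#A - m) := by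
    rw [← Nat.cast_sub hmA]; exact_mod_cast h₂
  rw [sum_congr rfl hK, sum_sum_filter_eq_nsmul_sum _ _ _ _ hcount, nsmul_eq_mul, innerWeight]
  linear_combination (∑ p ∈ A.offDiag, w p.1 p.2) * (m * h₂R - #A * h₁R)

end Counting

/-- In the exchange round `a = #(H \ S)` counts the candidates, `r` the vertices to replace and
`k` the budget of the part, so that `a + (k - r) = #H ≥ k / ε`. -/
lemma kernel_size_bounds {ε a k r : ℝ} (hε0 : 0 < ε) (hε : ε ≤ 1 / 4) (hr : 1 ≤ r) (hrk : r ≤ k)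
    (ha : k / ε ≤ a + (k - r)) :
    k < a ∧ r ≤ ε * a ∧ r * (r - 1) ≤ 2 * ε * (k * (a - k)) := by
  have hk : k ≤ ε * (a + (k - r)) := by rwa [div_le_iff₀ hε0, mul_comm] at ha
  have hgap : k ≤ 2 * ε * (a - k) := by nlinarith
  refine ⟨by nlinarith, by nlinarith, ?_⟩
  calc r * (r - 1) ≤ k * k := by nlinarith
    _ ≤ k * (2 * ε * (a - k)) := mul_le_mul_of_nonneg_left hgap (by linarith)
    _ = 2 * ε * (k * (a - k)) := by ring

section Averaging

variable {V : Type*} [DecidableEq V] {w : V → V → ℝ}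

lemma exists_mem_powersetCard_mul_swapLoss_le (A C : Finset V) {r : ℕ} (hr : 1 ≤ r)
    (hrA : r ≤ #A) :
    ∃ B ∈ A.powersetCard r, (#A : ℝ) * (#A - 1) * swapLoss w C B
      ≤ r * (2 * (#A - 1) * crossWeight w A C + (r - 1) * innerWeight w A) := by
  obtain ⟨B, hB, hmin⟩ :=
    exists_min_image (A.powersetCard r) (swapLoss w C) (powersetCard_nonempty.mpr hrA)
  have hN : (0 : ℝ) < (#A).choose r := by exact_mod_cast Nat.choose_pos hrA
  have hA1 : (0 : ℝ) ≤ #A - 1 := by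
    rw [sub_nonneg, Nat.one_le_cast]
    omega
  have havg : ((#A).choose r : ℝ) * swapLoss w C B
      ≤ 2 * ∑ B ∈ A.powersetCard r, crossWeight w B C
        + ∑ B ∈ A.powersetCard r, innerWeight w B := by
    have := card_nsmul_le_sum _ _ _ hmin
    rw [card_powersetCard, nsmul_eq_mul] at this
    unfold swapLoss at this
    rwa [sum_add_distrib, ← mul_sum] at this
  refine ⟨B, hB, le_of_mul_le_mul_left ?_ hN⟩
  calc ((#A).choose r : ℝ) * (#A * (#A - 1) * swapLoss w C B)
      = #A * (#A - 1) * (((#A).choose r : ℝ) * swapLoss w C B) := by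
        ring
    _ ≤ #A * (#A - 1) * (2 * ∑ B ∈ A.powersetCard r, crossWeight w B C
        + ∑ B ∈ A.powersetCard r, innerWeight w B) :=
        mul_le_mul_of_nonneg_left havg (mul_nonneg (Nat.cast_nonneg _) hA1)
    _ = _ := by
        linear_combination 2 * (#A - 1 : ℝ) * mul_sum_powersetCard_crossWeight (w := w) A C hr
          + mul_sum_powersetCard_innerWeight (w := w) A r

lemma mul_innerWeight_le (A : Finset V) {m : ℕ} (hm : 1 ≤ m) (hmA : m ≤ #A) {M : ℝ}
    (hM : ∀ K ∈ A.powersetCard m, crossWeight w K (A \ K) ≤ M) :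
    m * (#A - m) * innerWeight w A ≤ #A * (#A - 1) * M := by
  have hN : (0 : ℝ) < (#A).choose m := by exact_mod_cast Nat.choose_pos hmA
  have hsum : ∑ K ∈ A.powersetCard m, crossWeight w K (A \ K) ≤ (#A).choose m * M := by
    have := sum_le_card_nsmul _ _ _ hM
    rwa [card_powersetCard, nsmul_eq_mul] at this
  have hA1 : (0 : ℝ) ≤ #A * (#A - 1) := by
    have : (1 : ℝ) ≤ #A := by exact_mod_cast hm.trans hmA
    nlinarith
  refine le_of_mul_le_mul_left ?_ hN
  calc ((#A).choose m : ℝ) * (m * (#A - m) * innerWeight w A)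
      = #A * (#A - 1) * ∑ K ∈ A.powersetCard m, crossWeight w K (A \ K) := by
        rw [mul_sum_powersetCard_crossWeight_sdiff A hm hmA]
        ring
    _ ≤ #A * (#A - 1) * ((#A).choose m * M) := mul_le_mul_of_nonneg_left hsum hA1
    _ = _ := by ring

lemma exists_mem_powersetCard_swapLoss_le (hw : ∀ u v, 0 ≤ w u v) {A C : Finset V} {r k : ℕ}
    {ε M : ℝ} (hε0 : 0 < ε) (hε : ε ≤ 1 / 4) (hr : 1 ≤ r) (hrk : r ≤ k)
    (hA : (k : ℝ) / ε ≤ #A + (k - r)) (hAC : crossWeight w A C ≤ M)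
    (hM : ∀ K ∈ A.powersetCard k, crossWeight w K (A \ K) ≤ M) :
    ∃ B ∈ A.powersetCard r, swapLoss w C B ≤ 4 * ε * M := by
  obtain ⟨hkA, hrA, hrr⟩ := kernel_size_bounds hε0 hε (by exact_mod_cast hr)
    (by exact_mod_cast hrk) hA
  have hkA' : k < #A := by exact_mod_cast hkA
  obtain ⟨B, hB, hcost⟩ := exists_mem_powersetCard_mul_swapLoss_le (w := w) A C hr (by omega)
  have hinner := mul_innerWeight_le A (hr.trans hrk) hkA'.le hM
  have hA1 : (1 : ℝ) ≤ #A - 1 := by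
    rw [le_sub_iff_add_le]
    exact_mod_cast (show 2 ≤ #A by omega)
  have hAC0 := crossWeight_nonneg hw A C
  have hE0 := innerWeight_nonneg hw A
  have hlin : (r : ℝ) * (2 * (#A - 1) * crossWeight w A C) ≤ ε * #A * (2 * (#A - 1) * M) :=
    mul_le_mul hrA (by gcongr) (by positivity) (by positivity)
  have hquad : (r : ℝ) * (r - 1) * innerWeight w A ≤ 2 * ε * (#A * (#A - 1) * M) :=
    calc (r : ℝ) * (r - 1) * innerWeight w A ≤ 2 * ε * (k * (#A - k)) * innerWeight w A :=
          mul_le_mul_of_nonneg_right hrr hE0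
      _ ≤ 2 * ε * (#A * (#A - 1) * M) := by
          rw [mul_assoc]
          exact mul_le_mul_of_nonneg_left hinner (by positivity)
  have hpos : (0 : ℝ) < #A * (#A - 1) := mul_pos (by linarith) (by linarith)
  refine ⟨B, hB, le_of_mul_le_mul_left ?_ hpos⟩
  linarith

end Averaging

section Parts

variable {V ι : Type*} [DecidableEq V] (Vb : ι → Finset V) (k : ι → ℕ)

def IsFeasible (S : Finset V) : Prop := ∀ i, #(S ∩ Vb i) = k i

variable {Vb k}

lemma sdiff_union_inter_self (S : Finset V) {i : ι} {X : Finset V} (hX : X ⊆ Vb i) :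
    ((S \ Vb i) ∪ X) ∩ Vb i = X := by
  rw [union_inter_distrib_right, sdiff_inter_self, empty_union, inter_eq_left.mpr hX]

lemma sdiff_union_inter_of_ne (hV : Pairwise (Disjoint on Vb)) (S : Finset V) {i j : ι}
    {X : Finset V} (hX : X ⊆ Vb i) (hji : j ≠ i) : ((S \ Vb i) ∪ X) ∩ Vb j = S ∩ Vb j := by
  have hXj : X ∩ Vb j = ∅ := disjoint_iff_inter_eq_empty.mp ((hV hji.symm).mono_left hX)
  rw [union_inter_distrib_right, hXj, union_empty, sdiff_inter_right_comm,
    sdiff_eq_self_of_disjoint ((hV hji.symm).symm.mono_left inter_subset_right)]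

lemma IsFeasible.sdiff_union (hV : Pairwise (Disjoint on Vb)) {S : Finset V}
    (hS : IsFeasible Vb k S) {i : ι} {X : Finset V} (hX : X ⊆ Vb i) (hXk : #X = k i) :
    IsFeasible Vb k ((S \ Vb i) ∪ X) := by
  intro j
  by_cases hji : j = i
  · subst hji
    rw [sdiff_union_inter_self S hX, hXk]
  · rw [sdiff_union_inter_of_ne hV S hX hji, hS j]

lemma exists_isFeasible_forall_inter_subset [Fintype ι] (hV : Pairwise (Disjoint on Vb))
    {H : ι → Finset V} (hHV : ∀ i, H i ⊆ Vb i) (hkH : ∀ i, k i ≤ #(H i)) :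
    ∃ T, IsFeasible Vb k T ∧ ∀ i, T ∩ Vb i ⊆ H i := by
  choose t htH htk using fun i => exists_subset_card_eq (hkH i)
  have ht : ∀ i, univ.biUnion t ∩ Vb i = t i := by
    intro i
    ext x
    simp only [mem_inter, mem_biUnion, mem_univ, true_and]
    constructor
    · rintro ⟨⟨j, hx⟩, hxi⟩
      obtain rfl : j = i := by_contra fun hji =>
        disjoint_left.mp (hV hji) (hHV j (htH j hx)) hxi
      exact hx
    · exact fun hx => ⟨⟨i, hx⟩, hHV i (htH i hx)⟩
  exact ⟨univ.biUnion t, fun i => by rw [ht, htk], fun i => by rw [ht]; exact htH i⟩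

variable [Fintype V] {w : V → V → ℝ}

lemma exists_isFeasible_cutVal_sub_swapLoss_le (hsymm : ∀ u v, w u v = w v u)
    (hw : ∀ u v, 0 ≤ w u v) (hV : Pairwise (Disjoint on Vb)) {i : ι} {H : Finset V}
    (hHV : H ⊆ Vb i) (hdeg : ∀ u ∈ H, ∀ v ∈ Vb i \ H, wdeg w v ≤ wdeg w u) {S B : Finset V}
    (hS : IsFeasible Vb k S) (hBA : B ⊆ H \ S) (hBr : #B = #((S ∩ Vb i) \ H)) :
    ∃ T, IsFeasible Vb k T ∧ (∀ j ≠ i, T ∩ Vb j = S ∩ Vb j) ∧ T ∩ Vb i ⊆ H ∧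
      cutVal w S - swapLoss w ((S \ Vb i) ∪ (S ∩ H)) B ≤ cutVal w T := by
  set R := (S ∩ Vb i) \ H
  set C := (S \ Vb i) ∪ (S ∩ H)
  have hBS : Disjoint B S := sdiff_disjoint.mono_left hBA
  have hBH : B ⊆ H := hBA.trans sdiff_subset
  have hXV : S ∩ H ∪ B ⊆ Vb i := union_subset (inter_subset_right.trans hHV) (hBH.trans hHV)
  have hXk : #(S ∩ H ∪ B) = k i := by
    rw [card_union_of_disjoint (hBS.symm.mono_left inter_subset_left), hBr, ← hS i,
      ← card_sdiff_add_card_inter (S ∩ Vb i) H, inter_right_comm,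
      inter_eq_left.mpr (inter_subset_right.trans hHV), add_comm]
  have hCR : C ∪ R = S := by
    ext x
    simp only [C, R, mem_union, mem_sdiff, mem_inter]
    have := @hHV x
    tauto
  have hCR' : Disjoint C R := by
    simp only [C, R, disjoint_left, mem_union, mem_sdiff, mem_inter]
    tauto
  have hswap := cutVal_sub_swapLoss_le_cutVal hsymm hw hCR'
    (hBS.symm.mono_left (union_subset sdiff_subset inter_subset_left))
    (hBS.symm.mono_left (sdiff_subset.trans inter_subset_left))
    (sum_le_sum_of_card_eq_of_forall_le hBr.symm fun v hv u hu =>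
      hdeg u (hBH hu) v (sdiff_subset_sdiff inter_subset_right subset_rfl hv))
  rw [hCR, union_assoc] at hswap
  refine ⟨(S \ Vb i) ∪ (S ∩ H ∪ B), hS.sdiff_union hV hXV hXk,
    fun j hj => sdiff_union_inter_of_ne hV S hXV hj, ?_, hswap⟩
  rw [sdiff_union_inter_self S hXV]
  exact union_subset inter_subset_right hBH

lemma exists_isFeasible_inter_subset_cutVal_ge (hsymm : ∀ u v, w u v = w v u)
    (hw : ∀ u v, 0 ≤ w u v) (hV : Pairwise (Disjoint on Vb)) {M ε : ℝ}
    (hM : ∀ S, IsFeasible Vb k S → cutVal w S ≤ M) (hε0 : 0 < ε) (hε : ε ≤ 1 / 4) {i : ι}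
    {H : Finset V} (hHV : H ⊆ Vb i) (hdeg : ∀ u ∈ H, ∀ v ∈ Vb i \ H, wdeg w v ≤ wdeg w u)
    (hH : H = Vb i ∨ (k i : ℝ) / ε ≤ #H) {S : Finset V} (hS : IsFeasible Vb k S) :
    ∃ T, IsFeasible Vb k T ∧ (∀ j ≠ i, T ∩ Vb j = S ∩ Vb j) ∧ T ∩ Vb i ⊆ H ∧
      cutVal w S - 4 * ε * M ≤ cutVal w T := by
  have hSM := hM S hS
  by_cases hsub : S ∩ Vb i ⊆ H
  · exact ⟨S, hS, fun _ _ => rfl, hsub, by nlinarith [cutVal_nonneg hw S]⟩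
  have hHcard := hH.resolve_left fun h => hsub (h ▸ inter_subset_right)
  set R := (S ∩ Vb i) \ H
  set A := H \ S
  have hr : 1 ≤ #R := card_pos.mpr (sdiff_nonempty.mpr hsub)
  have hSH : #R + #(S ∩ H) = k i := by
    rw [← hS i, ← card_sdiff_add_card_inter (S ∩ Vb i) H, inter_right_comm,
      inter_eq_left.mpr (inter_subset_right.trans hHV)]
  have hHA : #A + #(S ∩ H) = #H := by rw [inter_comm, card_sdiff_add_card_inter]
  have hAk : (k i : ℝ) / ε ≤ #A + (k i - #R) := by
    have hHA' : (#H : ℝ) = #A + #(S ∩ H) := by exact_mod_cast hHA.symm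
    have hSH' : (k i : ℝ) = #R + #(S ∩ H) := by exact_mod_cast hSH.symm
    linarith
  have hAS : Disjoint A S := sdiff_disjoint
  have hAC : crossWeight w A ((S \ Vb i) ∪ (S ∩ H)) ≤ M :=
    (crossWeight_le_cutVal hsymm hw hAS (union_subset sdiff_subset inter_subset_left)).trans hSM
  have hAK : ∀ K ∈ A.powersetCard (k i), crossWeight w K (A \ K) ≤ M := fun K hK =>
    have ⟨hKA, hKk⟩ := mem_powersetCard.mp hK
    (crossWeight_sdiff_le_cutVal_union hw (hAS.mono_right sdiff_subset)).trans
      (hM _ (hS.sdiff_union hV (hKA.trans (sdiff_subset.trans hHV)) hKk))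
  obtain ⟨B, hB, hloss⟩ := exists_mem_powersetCard_swapLoss_le hw hε0 hε hr (by omega) hAk hAC hAK
  obtain ⟨hBA, hBr⟩ := mem_powersetCard.mp hB
  obtain ⟨T, hT, hTS, hTH, hcut⟩ :=
    exists_isFeasible_cutVal_sub_swapLoss_le hsymm hw hV hHV hdeg hS hBA hBr
  exact ⟨T, hT, hTS, hTH, by linarith⟩

lemma exists_isFeasible_forall_mem_inter_subset [DecidableEq ι]
    (hsymm : ∀ u v, w u v = w v u) (hw : ∀ u v, 0 ≤ w u v) (hV : Pairwise (Disjoint on Vb))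
    {M ε : ℝ} (hM : ∀ S, IsFeasible Vb k S → cutVal w S ≤ M) (hε0 : 0 < ε)
    {H : ι → Finset V} (hHV : ∀ i, H i ⊆ Vb i)
    (hdeg : ∀ i, ∀ u ∈ H i, ∀ v ∈ Vb i \ H i, wdeg w v ≤ wdeg w u)
    (hH : ∀ i, H i = Vb i ∨ (k i : ℝ) / ε ≤ #(H i)) (I : Finset ι) (hI : 4 * #I * ε ≤ 1)
    {S : Finset V} (hS : IsFeasible Vb k S) :
    ∃ T, IsFeasible Vb k T ∧ (∀ j ∈ I, T ∩ Vb j ⊆ H j) ∧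
      cutVal w S - #I * (4 * ε * M) ≤ cutVal w T := by
  induction I using Finset.induction_on with
  | empty => exact ⟨S, hS, by simp, by simp⟩
  | insert i I hi ih =>
    rw [card_insert_of_notMem hi, Nat.cast_add_one] at hI ⊢
    have hI0 : (0 : ℝ) ≤ #I := Nat.cast_nonneg _
    obtain ⟨T, hT, hTH, hTS⟩ := ih (by nlinarith)
    obtain ⟨T', hT', hsame, hT'H, hT'T⟩ := exists_isFeasible_inter_subset_cutVal_ge hsymm hw hV
      hM hε0 (by nlinarith) (hHV i) (hdeg i) (hH i) hT
    refine ⟨T', hT', ?_, by linarith⟩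
    intro j hj
    rcases mem_insert.mp hj with rfl | hj
    · exact hT'H
    · rw [hsame j (ne_of_mem_of_not_mem hj hi)]
      exact hTH j hj

end Parts

end ConstrainedMaxCut

open ConstrainedMaxCut

theorem maxcut_kernel_constrained {V : Type*} [Fintype V] [DecidableEq V]
    (w : V → V → ℝ) (hsymm : ∀ u v, w u v = w v u) (hnonneg : ∀ u v, 0 ≤ w u v)
    (c : ℕ) (Vb : Fin c → Finset V)
    (hVdisj : ∀ i j, i ≠ j → Disjoint (Vb i) (Vb j))
    (k : Fin c → ℕ) (hk2 : ∀ i, 2 * k i ≤ (Vb i).card)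
    (ε : ℝ) (hε0 : 0 < ε) (hε : ε ≤ 1 / 2)
    (H : Fin c → Finset V) (hHsub : ∀ i, H i ⊆ Vb i)
    (hdeg : ∀ i, ∀ u ∈ H i, ∀ v ∈ Vb i \ H i, wdeg w v ≤ wdeg w u)
    (hHsize : ∀ i, H i = Vb i ∨ (k i : ℝ) / ε ≤ ((H i).card : ℝ)) :
    ∃ T : Finset V, (∀ i, T ∩ Vb i ⊆ H i ∧ (T ∩ Vb i).card = k i) ∧
      ∀ S : Finset V, (∀ i, (S ∩ Vb i).card = k i) →
        (1 - 4 * (c : ℝ) * ε) * cutVal w S ≤ cutVal w T := by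
  classical
  have hV : Pairwise (Disjoint on Vb) := fun i j => hVdisj i j
  have hkH : ∀ i, k i ≤ #(H i) := by
    intro i
    rcases hHsize i with h | h
    · rw [h]
      linarith [hk2 i]
    · exact_mod_cast (le_div_self (Nat.cast_nonneg _) hε0 (by linarith)).trans h
  obtain ⟨T₀, hT₀, hT₀H⟩ := exists_isFeasible_forall_inter_subset hV hHsub hkH
  by_cases hsmall : 1 - 4 * (c : ℝ) * ε ≤ 0
  · exact ⟨T₀, fun i => ⟨hT₀H i, hT₀ i⟩, fun S _ => (mul_nonpos_of_nonpos_of_nonneg hsmall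
      (cutVal_nonneg hnonneg S)).trans (cutVal_nonneg hnonneg T₀)⟩
  obtain ⟨Sopt, hSopt, hmax⟩ := exists_max_image {S : Finset V | IsFeasible Vb k S} (cutVal w)
    ⟨T₀, by simpa using hT₀⟩
  have hM : ∀ S, IsFeasible Vb k S → cutVal w S ≤ cutVal w Sopt := fun S hS => hmax S (by simpa)
  obtain ⟨T, hT, hTH, hTS⟩ := exists_isFeasible_forall_mem_inter_subset hsymm hnonneg hV hM
    hε0 hHsub hdeg hHsize univ (by rw [card_univ, Fintype.card_fin]; linarith)
    (by simpa using hSopt)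
  refine ⟨T, fun i => ⟨hTH i (mem_univ i), hT i⟩, fun S hS => ?_⟩
  rw [card_univ, Fintype.card_fin] at hTS
  nlinarith [hM S hS, cutVal_nonneg hnonneg S]
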